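/- arXiv:math/0006095 — 3 statements merged into one kernel-verified Lean document; each statement's English description precedes it below -/
import Mathlib

section
/- Let G be a finite group and T : G → GL_m(ℂ) a complex representation; extend T ℂ-linearly to an algebra map T : ℂ[G] → M_m(ℂ), and further to T : M_n(ℂ[G]) → M_{nm}(ℂ) by applying T to each entry. Extend the involution x ↦ x̄ of ℂ[G] to matrices over ℂ[G] by transposition together with the involution on each entry, A ↦ Ā. Then for every invertible matrix A ∈ GL_n(ℂ[G]), |det(T(Ā))| = |det(T(A))|. -/
open scoped BigOperators

/-- The involution `x ↦ x̄` of the complex group algebra `ℂ[G]`, sending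
`Σ a_g g` to `Σ (conj a_g) g⁻¹`. -/
noncomputable def groupAlgConj {G : Type*} [Group G] [Fintype G]
    (x : MonoidAlgebra ℂ G) : MonoidAlgebra ℂ G :=
  ∑ g : G, MonoidAlgebra.single g⁻¹ (starRingEnd ℂ (x.coeff g))

/-- The extension of a representation `T : G → GL_m(ℂ)` (given as a multiplicative map
into `m × m` matrices; its values are automatically invertible) first `ℂ`-linearly to
`ℂ[G] → M_m(ℂ)`, and then entrywise to a map sending an `n × n` matrix over `ℂ[G]` to an
`nm × nm` complex (block) matrix. -/
noncomputable def blockApply {G : Type*} [Group G] [Fintype G] {m n : ℕ}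
    (T : G →* Matrix (Fin m) (Fin m) ℂ)
    (A : Matrix (Fin n) (Fin n) (MonoidAlgebra ℂ G)) :
    Matrix (Fin n × Fin m) (Fin n × Fin m) ℂ :=
  fun ip jq => ((MonoidAlgebra.lift ℂ (Matrix (Fin m) (Fin m) ℂ) G T) (A ip.1 jq.1)) ip.2 jq.2

/-- The conjugate-transpose `Ā` of a matrix over `ℂ[G]`:  transpose combined with the
involution `x ↦ x̄` of `ℂ[G]` applied to each entry. -/
noncomputable def matrixGroupAlgConj {G : Type*} [Group G] [Fintype G] {n : ℕ}
    (A : Matrix (Fin n) (Fin n) (MonoidAlgebra ℂ G)) :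
    Matrix (Fin n) (Fin n) (MonoidAlgebra ℂ G) :=
  fun i j => groupAlgConj (A j i)
/-!
Weyl's unitary trick: `H = ∑ₕ T(h)ᴴ T(h)` is positive definite and `T(g⁻¹)ᴴ H = H T(g)`, so the
conjugate dual representation `g ↦ T(g⁻¹)ᴴ` is similar to `T`, and the similarity extends to
`n × n` matrices over `ℂ[G]` through the block-diagonal matrix `diag(H, …, H)`. Since
`T(Ā)` is the conjugate transpose of the conjugate dual representation applied to `A`, its
determinant is the complex conjugate of `det T(A)`.
-/

open scoped ComplexOrder Matrix

namespace Matrix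

theorem det_eq_of_mul_eq_mul {ι R : Type*} [Fintype ι] [DecidableEq ι] [CommRing R]
    {X Y D : Matrix ι ι R} (hD : IsUnit D) (h : X * D = D * Y) : X.det = Y.det := by
  have hX : X = D * Y * D⁻¹ := by
    rw [← h, mul_nonsing_inv_cancel_right D X ((isUnit_iff_isUnit_det D).mp hD)]
  rw [hX, det_conj hD]

end Matrix

section Unitarization

variable {G 𝕜 ι : Type*} [Group G] [RCLike 𝕜] [Fintype ι] [DecidableEq ι]

noncomputable def conjDualRep (T : G →* Matrix ι ι 𝕜) : G →* Matrix ι ι 𝕜 where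
  toFun g := (T g⁻¹)ᴴ
  map_one' := by simp
  map_mul' g h := by simp [Matrix.conjTranspose_mul]

variable [Fintype G]

noncomputable def averagedGram (T : G →* Matrix ι ι 𝕜) : Matrix ι ι 𝕜 :=
  ∑ h : G, (T h)ᴴ * T h

theorem averagedGram_posDef (T : G →* Matrix ι ι 𝕜) : (averagedGram T).PosDef := by
  classical
  rw [averagedGram, ← Finset.add_sum_erase _ _ (Finset.mem_univ 1), map_one, mul_one,
    Matrix.conjTranspose_one]
  exact Matrix.PosDef.one.add_posSemidef <|
    Matrix.posSemidef_sum _ fun h _ => Matrix.posSemidef_conjTranspose_mul_self (T h)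

theorem conjDualRep_mul_averagedGram (T : G →* Matrix ι ι 𝕜) (g : G) :
    conjDualRep T g * averagedGram T = averagedGram T * T g := by
  simp only [conjDualRep, MonoidHom.coe_mk, OneHom.coe_mk, averagedGram, Finset.mul_sum,
    Finset.sum_mul]
  refine Fintype.sum_equiv (Equiv.mulRight g⁻¹) _ _ fun h => ?_
  rw [Equiv.coe_mulRight, map_mul, Matrix.conjTranspose_mul, mul_assoc, mul_assoc, mul_assoc,
    ← map_mul, ← map_mul, inv_mul_cancel, mul_one]

theorem lift_conjDualRep_mul_averagedGram (T : G →* Matrix ι ι 𝕜) (x : MonoidAlgebra 𝕜 G) :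
    MonoidAlgebra.lift 𝕜 _ G (conjDualRep T) x * averagedGram T
      = averagedGram T * MonoidAlgebra.lift 𝕜 _ G T x := by
  induction x using MonoidAlgebra.induction_on with
  | of g => simpa using conjDualRep_mul_averagedGram T g
  | add x y hx hy => rw [map_add, map_add, add_mul, mul_add, hx, hy]
  | smul c x hx => rw [map_smul, map_smul, smul_mul_assoc, mul_smul_comm, hx]

end Unitarization

theorem lift_groupAlgConj {G ι : Type*} [Group G] [Fintype G] [Fintype ι] [DecidableEq ι]
    (T : G →* Matrix ι ι ℂ) (x : MonoidAlgebra ℂ G) :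
    MonoidAlgebra.lift ℂ _ G T (groupAlgConj x)
      = (MonoidAlgebra.lift ℂ _ G (conjDualRep T) x)ᴴ := by
  rw [groupAlgConj, map_sum, MonoidAlgebra.lift_apply, Finsupp.sum_fintype _ _ (by simp),
    Matrix.conjTranspose_sum]
  refine Finset.sum_congr rfl fun g _ => ?_
  simp [conjDualRep, Matrix.conjTranspose_smul]

section BlockApply

variable {G : Type*} [Group G] [Fintype G] {m n : ℕ}

theorem blockApply_eq_comp (T : G →* Matrix (Fin m) (Fin m) ℂ)
    (A : Matrix (Fin n) (Fin n) (MonoidAlgebra ℂ G)) :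
    blockApply T A = Matrix.comp _ _ _ _ ℂ (A.map (MonoidAlgebra.lift ℂ _ G T)) :=
  rfl

theorem blockApply_matrixGroupAlgConj (T : G →* Matrix (Fin m) (Fin m) ℂ)
    (A : Matrix (Fin n) (Fin n) (MonoidAlgebra ℂ G)) :
    blockApply T (matrixGroupAlgConj A) = (blockApply (conjDualRep T) A)ᴴ := by
  ext ⟨i, p⟩ ⟨j, q⟩
  simp [blockApply, matrixGroupAlgConj, lift_groupAlgConj]

theorem det_blockApply_conjDualRep (T : G →* Matrix (Fin m) (Fin m) ℂ)
    (A : Matrix (Fin n) (Fin n) (MonoidAlgebra ℂ G)) :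
    (blockApply (conjDualRep T) A).det = (blockApply T A).det := by
  set D := Matrix.scalar (Fin n) (averagedGram T)
  have hD : IsUnit (Matrix.comp _ _ _ _ ℂ D) :=
    (Matrix.isUnit_comp_iff _ _ _).mpr <| (averagedGram_posDef T).isUnit.map _
  refine Matrix.det_eq_of_mul_eq_mul hD ?_
  simp only [blockApply_eq_comp, ← Matrix.compRingEquiv_apply, ← map_mul]
  congr 1
  ext i j : 1
  simp only [D, Matrix.scalar_apply, Matrix.mul_diagonal, Matrix.diagonal_mul, Matrix.map_apply,
    lift_conjDualRep_mul_averagedGram]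

end BlockApply

theorem abs_det_blockApply_conj_general {G : Type*} [Group G] [Fintype G] {m n : ℕ}
    (T : G →* Matrix (Fin m) (Fin m) ℂ)
    (A : Matrix (Fin n) (Fin n) (MonoidAlgebra ℂ G)) :
    ‖Matrix.det (blockApply T (matrixGroupAlgConj A))‖
      = ‖Matrix.det (blockApply T A)‖ := by
  rw [blockApply_matrixGroupAlgConj, Matrix.det_conjTranspose, det_blockApply_conjDualRep,
    norm_star]

/-- For every invertible `n × n` matrix `A` over `ℂ[G]` and every representation
`T : G → GL_m(ℂ)`, one has `|det T(Ā)| = |det T(A)|`. -/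
theorem abs_det_blockApply_conj {G : Type*} [Group G] [Fintype G] {m n : ℕ}
    (T : G →* Matrix (Fin m) (Fin m) ℂ)
    (A : Matrix (Fin n) (Fin n) (MonoidAlgebra ℂ G))
    (hA : IsUnit A) :
    ‖Matrix.det (blockApply T (matrixGroupAlgConj A))‖
      = ‖Matrix.det (blockApply T A)‖ :=
  abs_det_blockApply_conj_general T A
end

section
/- Let G be a finite group, I ≤ G a cyclic subgroup, and V a finite-dimensional complex representation of G admitting a G-invariant non-degenerate alternating bilinear form (i.e. V is a symplectic representation of G). Then dim_ℂ V − dim_ℂ V^I is an even integer, where V^I denotes the subspace of I-fixed vectors. Equivalently, the inner product of the character of V with Ind_I^G u_I is even, where u_I is the regular character of I minus the trivial character of I. -/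
/-!
An invariant symplectic form `ω` stays nondegenerate on the fixed space `V^I` of a finite group
`I`: if `v ∈ V^I` pairs to zero with `V^I`, it pairs to zero with every `∑_{g ∈ I} g u`, and
`ω v (∑_{g ∈ I} g u) = |I| ω v u` by invariance. A nondegenerate alternating form forces even
dimension (its Gram matrix is skew-symmetric, so of vanishing determinant in odd size), hence
both `dim V` and `dim V^I` are even.
-/

open Module Matrix

theorem Matrix.det_eq_zero_of_transpose_eq_neg {R n : Type*} [CommRing R] [NoZeroDivisors R]
    [NeZero (2 : R)] [Fintype n] [DecidableEq n] {A : Matrix n n R} (hA : Aᵀ = -A)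
    (hn : Odd (Fintype.card n)) : A.det = 0 := by
  have hdet : A.det = -A.det := calc
    A.det = Aᵀ.det := (det_transpose A).symm
    _ = -A.det := by rw [hA, det_neg, hn.neg_one_pow, neg_one_mul]
  have h2 : (2 : R) * A.det = 0 := by linear_combination hdet
  exact (mul_eq_zero.mp h2).resolve_left two_ne_zero

theorem LinearMap.even_finrank_of_isAlt_of_separatingLeft {K V : Type*} [Field K]
    [NeZero (2 : K)] [AddCommGroup V] [Module K V] [FiniteDimensional K V]
    {B : V →ₗ[K] V →ₗ[K] K} (hB : B.IsAlt) (hsep : B.SeparatingLeft) :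
    Even (finrank K V) := by
  let b := finBasis K V
  have hskew : (toMatrix₂ b b B)ᵀ = -toMatrix₂ b b B := by
    ext i j
    simp only [transpose_apply, Matrix.neg_apply, toMatrix₂_apply]
    exact (hB.neg (b i) (b j)).symm
  by_contra hodd
  refine (separatingLeft_iff_det_ne_zero b).mp hsep ?_
  exact det_eq_zero_of_transpose_eq_neg hskew
    (by simpa using Nat.not_even_iff_odd.mp hodd)

namespace Representation

variable {K G V : Type*} [CommRing K] [Group G] [AddCommGroup V] [Module K V]
  {ρ : Representation K G V} {B : V →ₗ[K] V →ₗ[K] K}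

theorem apply_self_of_mem_invariants (hinv : ∀ g v u, B (ρ g v) (ρ g u) = B v u)
    {v : V} (hv : v ∈ ρ.invariants) (g : G) (u : V) : B v (ρ g u) = B v u := by
  conv_lhs => rw [← hv g]
  exact hinv g v u

theorem separatingLeft_compl₁₂_invariants [Fintype G] [NoZeroDivisors K]
    [NeZero (Fintype.card G : K)] (hsep : B.SeparatingLeft)
    (hinv : ∀ g v u, B (ρ g v) (ρ g u) = B v u) :
    (B.compl₁₂ ρ.invariants.subtype ρ.invariants.subtype).SeparatingLeft := by
  rintro ⟨v, hv⟩ horth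
  suffices ∀ u, B v u = 0 from Subtype.ext (hsep v this)
  intro u
  have hnorm : B v (ρ.norm u) = (Fintype.card G : K) * B v u := by
    simp [norm, map_sum, apply_self_of_mem_invariants hinv hv]
  have hzero : B v (ρ.norm u) = 0 := horth ⟨ρ.norm u, fun g => ρ.self_norm_apply g u⟩
  rw [hnorm] at hzero
  exact (mul_eq_zero.mp hzero).resolve_left (NeZero.ne _)

end Representation

theorem even_codim_fixed_of_symplectic_general {G : Type*} [Group G] [Fintype G]
    {V : Type*} [AddCommGroup V] [Module ℂ V] [FiniteDimensional ℂ V]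
    (ρ : Representation ℂ G V) (I : Subgroup G)
    (ω : V →ₗ[ℂ] V →ₗ[ℂ] ℂ)
    (halt : ∀ v : V, ω v v = 0)
    (hnondeg : ∀ v : V, (∀ u : V, ω v u = 0) → v = 0)
    (hinv : ∀ (g : G) (v u : V), ω (ρ g v) (ρ g u) = ω v u) :
    Even (Module.finrank ℂ V
      - Module.finrank ℂ ↥(⨅ g : I, LinearMap.eqLocus (ρ (g : G)) (LinearMap.id : V →ₗ[ℂ] V))) := by
  classical
  let ρI : Representation ℂ I V := ρ.comp I.subtype
  have hfixed : ⨅ g : I, LinearMap.eqLocus (ρ (g : G)) LinearMap.id = ρI.invariants := by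
    ext v
    simp [Submodule.mem_iInf, ρI]
  have hEvenV : Even (finrank ℂ V) := LinearMap.even_finrank_of_isAlt_of_separatingLeft halt hnondeg
  have hEvenFixed : Even (finrank ℂ ρI.invariants) :=
    LinearMap.even_finrank_of_isAlt_of_separatingLeft (fun v => halt v)
      (Representation.separatingLeft_compl₁₂_invariants (ρ := ρI) hnondeg fun g => hinv g)
  rw [hfixed, Nat.even_sub (Submodule.finrank_le _)]
  exact iff_of_true hEvenV hEvenFixed

/-- Let `G` be a finite group, `I ≤ G` a cyclic subgroup, and `V` a finite-dimensional complex
representation of `G` admitting a `G`-invariant non-degenerate alternating bilinear form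
(i.e. `V` is a symplectic representation of `G`).  Then `dim_ℂ V − dim_ℂ V^I` is even,
where `V^I` is the subspace of `I`-fixed vectors. -/
theorem even_codim_fixed_of_symplectic {G : Type*} [Group G] [Fintype G]
    {V : Type*} [AddCommGroup V] [Module ℂ V] [FiniteDimensional ℂ V]
    (ρ : Representation ℂ G V) (I : Subgroup G) (hI : IsCyclic I)
    (ω : V →ₗ[ℂ] V →ₗ[ℂ] ℂ)
    (halt : ∀ v : V, ω v v = 0)
    (hnondeg : ∀ v : V, (∀ u : V, ω v u = 0) → v = 0)
    (hinv : ∀ (g : G) (v u : V), ω (ρ g v) (ρ g u) = ω v u) :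
    Even (Module.finrank ℂ V
      - Module.finrank ℂ ↥(⨅ g : I, LinearMap.eqLocus (ρ (g : G)) (LinearMap.id : V →ₗ[ℂ] V))) :=
  even_codim_fixed_of_symplectic_general ρ I ω halt hnondeg hinv
end

section
/- Every unit x of the finite adele ring of ℚ (the restricted product of the completions ℚ_p with respect to the subrings ℤ_p, over all prime numbers p) admits a factorization x = q·u where q is a positive rational number (viewed diagonally in the finite adeles) and u is a unit of the finite adele ring whose component at every prime p is a unit of ℤ_p (equivalently, both u and u⁻¹ have all components integral). Moreover this factorization is unique: if q·u = q′·u′ with q, q′ positive rationals and u, u′ everywhere-integral unit ideles, then q = q′ and u = u′. -/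
/-!
The valuations `v(x_v)` of a finite idele `x` are nonzero and equal to `1` for almost all `v`.
Since `ℤ` is a principal ideal domain, a product of powers of generators of the primes is a
rational number with exactly these valuations, and its absolute value is a positive one, `q`;
then `q⁻¹x` has valuation `1` everywhere, i.e. it is an everywhere-integral unit. Two positive
rationals with the same valuations everywhere differ by a unit of `ℤ`, hence are equal, and this
gives uniqueness.
-/

open IsDedekindDomain HeightOneSpectrum FiniteAdeleRing WithZero

namespace IsDedekindDomain.HeightOneSpectrum

variable {R : Type*} [CommRing R]

theorem ne_zero_of_asIdeal_eq_span {v : HeightOneSpectrum R} {π : R}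
    (hπ : v.asIdeal = Ideal.span {π}) : π ≠ 0 := by
  rintro rfl
  exact v.ne_bot (by rw [hπ, Ideal.span_singleton_eq_bot])

variable [IsDedekindDomain R]

theorem intValuation_eq_one_of_asIdeal_eq_span {v w : HeightOneSpectrum R} {π : R}
    (hπ : v.asIdeal = Ideal.span {π}) (hwv : w ≠ v) : w.intValuation π = 1 := by
  rw [intValuation_eq_one_iff]
  intro hπw
  have hle : v.asIdeal ≤ w.asIdeal := by
    rwa [hπ, Ideal.span_le, Set.singleton_subset_iff]
  exact hwv (HeightOneSpectrum.ext (v.isMaximal.eq_of_le w.isPrime.ne_top hle).symm)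

variable (K : Type*) [Field K] [Algebra R K] [IsFractionRing R K]

open Classical in
theorem valuation_zpow_of_asIdeal_eq_span {v : HeightOneSpectrum R} {π : R}
    (hπ : v.asIdeal = Ideal.span {π}) (n : ℤ) (w : HeightOneSpectrum R) :
    w.valuation K (algebraMap R K π ^ n) = if w = v then exp (-n) else 1 := by
  rw [map_zpow₀, valuation_of_algebraMap]
  split_ifs with hwv
  · subst hwv
    rw [w.intValuation_singleton (ne_zero_of_asIdeal_eq_span hπ) hπ, ← exp_zsmul, smul_neg,
      zsmul_one, Int.cast_id]
  · rw [intValuation_eq_one_of_asIdeal_eq_span hπ hwv, one_zpow]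

theorem exists_valuation_eq [IsPrincipalIdealRing R] (γ : HeightOneSpectrum R → ℤᵐ⁰)
    (hγ₀ : ∀ v, γ v ≠ 0) (hγ : {v | γ v ≠ 1}.Finite) :
    ∃ k : K, k ≠ 0 ∧ ∀ v, v.valuation K k = γ v := by
  classical
  choose π hπ using fun v : HeightOneSpectrum R ↦
    (IsPrincipalIdealRing.principal v.asIdeal).principal
  refine ⟨∏ v ∈ hγ.toFinset, algebraMap R K (π v) ^ (-log (γ v)), ?_, fun w ↦ ?_⟩
  · refine Finset.prod_ne_zero_iff.mpr fun v _ ↦ zpow_ne_zero _ ?_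
    rw [map_ne_zero_iff _ (IsFractionRing.injective R K)]
    exact ne_zero_of_asIdeal_eq_span (hπ v)
  · simp only [map_prod, valuation_zpow_of_asIdeal_eq_span K (hπ _), Finset.prod_ite_eq, neg_neg]
    split_ifs with hw
    · exact exp_log (hγ₀ w)
    · rw [Set.Finite.mem_toFinset, Set.mem_ofPred_eq, not_not] at hw
      exact hw.symm

theorem exists_unit_of_valuation_eq_one {x : K} (hx : x ≠ 0)
    (h : ∀ v : HeightOneSpectrum R, v.valuation K x = 1) : ∃ u : Rˣ, algebraMap R K u = x := by
  obtain ⟨r, hr⟩ := mem_integers_of_valuation_le_one K x fun v ↦ (h v).le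
  obtain ⟨s, hs⟩ := mem_integers_of_valuation_le_one K x⁻¹ fun v ↦ by
    rw [map_inv₀, h v, inv_one]
  have hrs : r * s = 1 := IsFractionRing.injective R K <| by
    rw [map_mul, hr, hs, mul_inv_cancel₀ hx, map_one]
  exact ⟨Units.mkOfMulEqOne r s hrs, hr⟩

end IsDedekindDomain.HeightOneSpectrum

namespace IsDedekindDomain.FiniteAdeleRing

variable {R K : Type*} [CommRing R] [IsDedekindDomain R] [Field K] [Algebra R K]
  [IsFractionRing R K]

theorem valued_mul (a b : FiniteAdeleRing R K) (v : HeightOneSpectrum R) :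
    Valued.v ((a * b) v) = Valued.v (a v) * Valued.v (b v) :=
  map_mul _ _ _

theorem valued_algebraMap (k : K) (v : HeightOneSpectrum R) :
    Valued.v (algebraMap K (FiniteAdeleRing R K) k v) = v.valuation K k :=
  valuedAdicCompletion_eq_valuation' v k

theorem valued_units_inv (a : (FiniteAdeleRing R K)ˣ) (v : HeightOneSpectrum R) :
    Valued.v ((↑a⁻¹ : FiniteAdeleRing R K) v) =
      (Valued.v ((a : FiniteAdeleRing R K) v))⁻¹ := by
  refine eq_inv_of_mul_eq_one_right ?_
  rw [← valued_mul, a.mul_inv]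
  exact map_one _

theorem valued_units_ne_zero (a : (FiniteAdeleRing R K)ˣ) (v : HeightOneSpectrum R) :
    Valued.v ((a : FiniteAdeleRing R K) v) ≠ 0 :=
  (Valuation.ne_zero_iff _).mpr ((isUnit_iff.mp a.isUnit).1 v)

theorem finite_valued_units_ne_one (a : (FiniteAdeleRing R K)ˣ) :
    {v | Valued.v ((a : FiniteAdeleRing R K) v) ≠ 1}.Finite :=
  (isUnit_iff.mp a.isUnit).2

theorem units_mem_adicCompletionIntegers_iff (u : (FiniteAdeleRing R K)ˣ) :
    ((∀ v, (u : FiniteAdeleRing R K) v ∈ v.adicCompletionIntegers K) ∧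
      ∀ v, (↑u⁻¹ : FiniteAdeleRing R K) v ∈ v.adicCompletionIntegers K) ↔
      ∀ v, Valued.v ((u : FiniteAdeleRing R K) v) = 1 := by
  simp only [mem_adicCompletionIntegers, valued_units_inv, ← forall_and]
  refine forall_congr' fun v ↦ ?_
  rw [inv_le_one₀ (zero_lt_iff.mpr (valued_units_ne_zero u v)), le_antisymm_iff]

end IsDedekindDomain.FiniteAdeleRing

namespace Rat

theorem exists_pos_valuation_eq (γ : HeightOneSpectrum ℤ → ℤᵐ⁰)
    (hγ₀ : ∀ v, γ v ≠ 0) (hγ : {v | γ v ≠ 1}.Finite) :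
    ∃ q : ℚ, 0 < q ∧ ∀ v, v.valuation ℚ q = γ v := by
  obtain ⟨k, hk, hkγ⟩ := exists_valuation_eq ℚ γ hγ₀ hγ
  refine ⟨|k|, abs_pos.mpr hk, fun v ↦ ?_⟩
  rcases abs_choice k with h | h <;> rw [h, ← hkγ v]
  exact Valuation.map_neg _ k

theorem eq_of_valuation_eq {q q' : ℚ} (hq : 0 < q) (hq' : 0 < q')
    (h : ∀ v : HeightOneSpectrum ℤ, v.valuation ℚ q = v.valuation ℚ q') : q = q' := by
  have hdiv : ∀ v : HeightOneSpectrum ℤ, v.valuation ℚ (q / q') = 1 := fun v ↦ by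
    rw [map_div₀, h v, div_self ((Valuation.ne_zero_iff _).mpr hq'.ne')]
  obtain ⟨u, hu⟩ := exists_unit_of_valuation_eq_one ℚ (div_pos hq hq').ne' hdiv
  rcases Int.units_eq_one_or u with rfl | rfl
  · exact (div_eq_one_iff_eq hq'.ne').mp (by simpa using hu.symm)
  · exact absurd (div_pos hq hq') (by simp [← hu])

end Rat

/-- Every unit `x` of the finite adele ring of `ℚ` (the restricted product of the `ℚ_p` with
respect to the `ℤ_p`) factors uniquely as `x = q·u`, where `q` is a positive rational number
(embedded diagonally) and `u` is a unit all of whose components, and all of whose inverse's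
components, are integral. -/
theorem finiteAdele_unit_factorization (x : (FiniteAdeleRing ℤ ℚ)ˣ) :
    ∃! qu : ℚ × (FiniteAdeleRing ℤ ℚ)ˣ,
      0 < qu.1 ∧
      (∀ v : HeightOneSpectrum ℤ,
        (qu.2 : FiniteAdeleRing ℤ ℚ) v
          ∈ v.adicCompletionIntegers ℚ) ∧
      (∀ v : HeightOneSpectrum ℤ,
        ((qu.2⁻¹ : (FiniteAdeleRing ℤ ℚ)ˣ) : FiniteAdeleRing ℤ ℚ) v
          ∈ v.adicCompletionIntegers ℚ) ∧
      (x : FiniteAdeleRing ℤ ℚ) = algebraMap ℚ (FiniteAdeleRing ℤ ℚ) qu.1 * (qu.2 : FiniteAdeleRing ℤ ℚ) := by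
  obtain ⟨q, hq, hqx⟩ :=
    Rat.exists_pos_valuation_eq _ (valued_units_ne_zero x) (finite_valued_units_ne_one x)
  set Q := unitEmbedding ℤ ℚ (Units.mk0 q hq.ne')
  have hQ : (Q : FiniteAdeleRing ℤ ℚ) = algebraMap ℚ _ q := rfl
  obtain ⟨hu, hu_inv⟩ := (units_mem_adicCompletionIntegers_iff (Q⁻¹ * x)).mpr fun v ↦ by
    rw [Units.val_mul, valued_mul, valued_units_inv, hQ, valued_algebraMap, hqx,
      inv_mul_cancel₀ (valued_units_ne_zero x v)]
  have hx : (x : FiniteAdeleRing ℤ ℚ) = algebraMap ℚ _ q * ↑(Q⁻¹ * x) := by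
    rw [← hQ, ← Units.val_mul, mul_inv_cancel_left]
  refine ⟨(q, Q⁻¹ * x), ⟨hq, hu, hu_inv, hx⟩, ?_⟩
  rintro ⟨q', u'⟩ ⟨hq', hu', hu'_inv, hx'⟩
  have hu'_valued := (units_mem_adicCompletionIntegers_iff u').mp ⟨hu', hu'_inv⟩
  have hq'x (v : HeightOneSpectrum ℤ) :
      v.valuation ℚ q' = Valued.v ((x : FiniteAdeleRing ℤ ℚ) v) := by
    rw [hx', valued_mul, valued_algebraMap, hu'_valued v, mul_one]
  obtain rfl : q' = q := Rat.eq_of_valuation_eq hq' hq fun v ↦ by rw [hq'x, hqx]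
  exact Prod.ext rfl (eq_inv_mul_iff_mul_eq.mpr (Units.ext hx'.symm))
end
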